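/- arXiv:0807.0433 — 2 statements merged into one kernel-verified Lean document; each statement's English description precedes it below -/
import Mathlib

section
/- For every integer k ≥ 2 and every permutation w (a word whose letters are the distinct integers 1 through n), iDes(w) = iDes(φ^{(k)}(w)), where iDes(w) = {i : i appears to the left of i+1 in w} is the descent set of the inverse permutation. -/
open scoped Classical

/-- `x` splits the pair `a`, `b` if `a ≤ x < b` or `b ≤ x < a`. -/
def Splits (x a b : ℕ) : Prop := (a ≤ x ∧ x < b) ∨ (b ≤ x ∧ x < a)

/-- `m ∈ Γ_j^{(k)}(w)`, where the word `w` is accessed with 1-based indices: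
`j - k ∈ Γ_j^{(k)}(w)` when `w j` splits the pair `w (j-k), w (j-k+1)`, and for
`i ∈ Γ_j^{(k)}(w)`, also `i - k ∈ Γ_j^{(k)}(w)` when exactly one of `w i`, `w (i+1)`
splits the pair `w (i-k), w (i-k+1)`. -/
def MemGamma (k : ℕ) (w : ℕ → ℕ) (j m : ℕ) : Prop :=
  1 ≤ m ∧ ∃ t : ℕ, m + (t + 1) * k = j ∧
    Splits (w j) (w (j - k)) (w (j - k + 1)) ∧
    ∀ s, 1 ≤ s → s ≤ t →
      Xor' (Splits (w (m + s * k)) (w (m + (s - 1) * k)) (w (m + (s - 1) * k + 1)))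
           (Splits (w (m + s * k + 1)) (w (m + (s - 1) * k)) (w (m + (s - 1) * k + 1)))

/-- The map `γ_j^{(k)}`: interchange `w i` and `w (i+1)` for every `i ∈ Γ_j^{(k)}(w)`. -/
noncomputable def gamW (k j : ℕ) (w : ℕ → ℕ) : ℕ → ℕ := fun p =>
  if MemGamma k w j p then w (p + 1)
  else if MemGamma k w j (p - 1) then w (p - 1)
  else w p

noncomputable def phiAux (k : ℕ) (w : ℕ → ℕ) : ℕ → ℕ → ℕ
  | 0 => w
  | j + 1 => gamW k (j + 1) (phiAux k w j)

/-- `φ^{(k)} = γ_n^{(k)} ∘ γ_{n-1}^{(k)} ∘ ⋯ ∘ γ_1^{(k)}` on words of length `n`. -/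
noncomputable def phiW (k n : ℕ) (w : ℕ → ℕ) : ℕ → ℕ := phiAux k w n

/-- 1-based access to the letters of a list word. -/
def wf (l : List ℕ) (i : ℕ) : ℕ := l.getD (i - 1) 0

/-- `φ^{(k)}` as an operation on list words. -/
noncomputable def phiL (k : ℕ) (l : List ℕ) : List ℕ :=
  List.ofFn (fun i : Fin l.length => phiW k l.length (wf l) (i.1 + 1))

/-- The `k`-descent set `Des_k(w) = {(i, i+k) : w i > w (i+k)}` of a word of length `n`,
recorded by its set of first components. -/
def DesKF (k n : ℕ) (w : ℕ → ℕ) : Finset ℕ :=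
  (Finset.Icc 1 n).filter fun i => i + k ≤ n ∧ w (i + k) < w i

/-- The `k`-inversion set `Inv_k(w) = {(i, j) : 0 < j - i < k and w i > w j}`. -/
def InvKF (k n : ℕ) (w : ℕ → ℕ) : Finset (ℕ × ℕ) :=
  ((Finset.Icc 1 n) ×ˢ (Finset.Icc 1 n)).filter fun p =>
    p.1 < p.2 ∧ p.2 - p.1 < k ∧ w p.2 < w p.1

/-- The `k`-major index `maj_k(w) = |Inv_k(w)| + Σ_{(i,i+k) ∈ Des_k(w)} i`. -/
def majKF (k n : ℕ) (w : ℕ → ℕ) : ℕ := (InvKF k n w).card + ∑ i ∈ DesKF k n w, i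

/-- The `k`-major index of a list word. -/
def majKL (k : ℕ) (l : List ℕ) : ℕ := majKF k l.length (wf l)

/-- The ordinary major index of a list word: the sum of the indices `i` with
`w i > w (i+1)`. -/
def majL (l : List ℕ) : ℕ :=
  ∑ i ∈ (Finset.Icc 1 l.length).filter (fun i => i + 1 ≤ l.length ∧ wf l (i + 1) < wf l i), i

/-- The ordinary inversion number of a list word: the number of pairs `i < j` with
`w i > w j`. -/
def invL (l : List ℕ) : ℕ :=
  (((Finset.Icc 1 l.length) ×ˢ (Finset.Icc 1 l.length)).filter fun p =>
    p.1 < p.2 ∧ wf l p.2 < wf l p.1).card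

/-- The inverse descent set of a permutation word:
`iDes(w) = {i : i appears to the left of i+1 in w}`. -/
def iDesL (l : List ℕ) : Set ℕ :=
  {i | i ∈ l ∧ (i + 1) ∈ l ∧ l.idxOf i < l.idxOf (i + 1)}

/-!
Each `γ_j^{(k)}` permutes positions by disjoint adjacent transpositions: all of `Γ_j^{(k)}(w)`
is congruent to `j` modulo `k ≥ 2`, so no two of its elements are adjacent. Moreover, for
`i ∈ Γ_j^{(k)}(w)` some letter to the right of position `i + 1` splits `w_i, w_{i+1}`; in a
permutation this forces `|w_i - w_{i+1}| ≥ 2`. Hence no swap exchanges two consecutive values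
`v, v + 1`, and every swap keeps the relative position of such a pair, so the inverse descent
set is preserved by every `γ_j^{(k)}`, hence by `φ^{(k)}`.
-/

open Set

noncomputable def adjSwap (S : Set ℕ) (p : ℕ) : ℕ :=
  if p ∈ S then p + 1 else if p - 1 ∈ S then p - 1 else p

/-- `iDes(w_1 ⋯ w_n)`, read off positions. -/
def iDesW (n : ℕ) (w : ℕ → ℕ) : Set ℕ :=
  {i | ∃ p ∈ Icc 1 n, ∃ q ∈ Icc 1 n, p < q ∧ w p = i ∧ w q = i + 1}

lemma iDesW_congr {n : ℕ} {w w' : ℕ → ℕ} (h : EqOn w w' (Icc 1 n)) :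
    iDesW n w = iDesW n w' := by
  ext i
  constructor <;> rintro ⟨p, hp, q, hq, hpq, rfl, hwq⟩
  · exact ⟨p, hp, q, hq, hpq, (h hp).symm, (h hq) ▸ hwq⟩
  · exact ⟨p, hp, q, hq, hpq, h hp, (h hq).symm ▸ hwq⟩

section adjSwap

variable {S : Set ℕ}

lemma adjSwap_le_succ (p : ℕ) : adjSwap S p ≤ p + 1 := by
  unfold adjSwap; split_ifs <;> omega

lemma pred_le_adjSwap (p : ℕ) : p - 1 ≤ adjSwap S p := by
  unfold adjSwap; split_ifs <;> omega

lemma adjSwap_le_of_notMem {p : ℕ} (hp : p ∉ S) : adjSwap S p ≤ p := by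
  unfold adjSwap; split_ifs <;> omega

lemma le_adjSwap_of_pred_notMem {p : ℕ} (hp : p - 1 ∉ S) : p ≤ adjSwap S p := by
  unfold adjSwap; split_ifs <;> omega

variable (hS : ∀ p ∈ S, p + 1 ∉ S)
include hS

lemma adjSwap_involutive : Function.Involutive (adjSwap S) := by
  intro p
  by_cases hp : p ∈ S
  · simp [adjSwap, hp, hS p hp]
  by_cases hp' : p - 1 ∈ S
  · have hpos : p ≠ 0 := by rintro rfl; exact hp hp'
    simp only [adjSwap, hp, hp', if_false, if_true]
    omega
  · simp [adjSwap, hp, hp']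

lemma adjSwap_lt_adjSwap {p q : ℕ} (hpq : p < q) (hadj : q = p + 1 → p ∉ S) :
    adjSwap S p < adjSwap S q := by
  have hne : adjSwap S p ≠ adjSwap S q := fun h => by
    have := (adjSwap_involutive hS).injective h
    omega
  rcases Nat.lt_or_ge (p + 1) q with hfar | hnear
  · have := adjSwap_le_succ (S := S) p
    have := pred_le_adjSwap (S := S) q
    omega
  · have hq : q = p + 1 := by omega
    have hp := hadj hq
    have := adjSwap_le_of_notMem hp
    have := le_adjSwap_of_pred_notMem (S := S) (p := q) (by rwa [hq, Nat.add_sub_cancel])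
    omega

omit hS in
lemma adjSwap_mapsTo {n : ℕ} (hSn : ∀ p ∈ S, 1 ≤ p ∧ p + 1 ≤ n) :
    MapsTo (adjSwap S) (Icc 1 n) (Icc 1 n) := by
  rintro p ⟨hp1, hpn⟩
  unfold adjSwap
  split_ifs with h h'
  · have := hSn p h; constructor <;> omega
  · have := hSn _ h'; constructor <;> omega
  · exact ⟨hp1, hpn⟩

theorem iDesW_comp_adjSwap {n : ℕ} {w : ℕ → ℕ} (hSn : ∀ p ∈ S, 1 ≤ p ∧ p + 1 ≤ n)
    (hgap : ∀ p ∈ S, w (p + 1) ≠ w p + 1 ∧ w p ≠ w (p + 1) + 1) :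
    iDesW n (w ∘ adjSwap S) = iDesW n w := by
  have hinv := adjSwap_involutive hS
  have hmaps := adjSwap_mapsTo hSn
  ext i
  constructor
  · rintro ⟨p, hp, q, hq, hpq, hwp, hwq⟩
    refine ⟨_, hmaps hp, _, hmaps hq, ?_, hwp, hwq⟩
    rcases lt_trichotomy (adjSwap S p) (adjSwap S q) with hlt | heq | hgt
    · exact hlt
    · simp only [Function.comp_apply, heq] at hwp hwq; omega
    · simp only [Function.comp_apply] at hwp hwq
      have hback := adjSwap_lt_adjSwap hS hgt fun h hmem =>
        (hgap _ hmem).2 (by rw [← h, hwp, hwq])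
      rw [hinv, hinv] at hback
      omega
  · rintro ⟨p, hp, q, hq, hpq, rfl, hwq⟩
    refine ⟨_, hmaps hp, _, hmaps hq,
      adjSwap_lt_adjSwap hS hpq fun h hmem => (hgap _ hmem).1 (h ▸ hwq), ?_, ?_⟩ <;>
      simp only [Function.comp_apply, hinv p, hinv q, hwq]

lemma injOn_comp_adjSwap {n : ℕ} {w : ℕ → ℕ} (hSn : ∀ p ∈ S, 1 ≤ p ∧ p + 1 ≤ n)
    (hw : InjOn w (Icc 1 n)) : InjOn (w ∘ adjSwap S) (Icc 1 n) :=
  hw.comp (adjSwap_involutive hS).injective.injOn (adjSwap_mapsTo hSn)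

end adjSwap

lemma Splits.add_two_le {x a b : ℕ} (h : Splits x a b) (ha : x ≠ a) (hb : x ≠ b) :
    a + 2 ≤ b ∨ b + 2 ≤ a := by
  unfold Splits at h; omega

namespace MemGamma

variable {k j m : ℕ} {w : ℕ → ℕ}

lemma bounds (h : MemGamma k w j m) : 1 ≤ m ∧ m + k ≤ j := by
  obtain ⟨hm, t, rfl, -⟩ := h
  exact ⟨hm, by nlinarith⟩

lemma modEq (h : MemGamma k w j m) : m ≡ j [MOD k] := by
  obtain ⟨-, t, rfl, -⟩ := h
  exact (Nat.add_mul_mod_self_right m (t + 1) k).symm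

lemma not_succ (hk : 2 ≤ k) (h : MemGamma k w j m) : ¬ MemGamma k w j (m + 1) := by
  intro h'
  have hdvd : k ∣ m + 1 - m := (Nat.modEq_iff_dvd' (by omega)).mp (h.modEq.trans h'.modEq.symm)
  rw [Nat.add_sub_cancel_left, Nat.dvd_one] at hdvd
  omega

/-- The letter witnessing `m ∈ Γ_j^{(k)}(w)`: `w_j` itself, or the letter of the first link of
the chain from `j` down to `m`. -/
lemma exists_splits (hk : 2 ≤ k) (h : MemGamma k w j m) :
    ∃ q, m + 2 ≤ q ∧ q ≤ j ∧ Splits (w q) (w m) (w (m + 1)) := by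
  obtain ⟨-, t, rfl, hbase, hchain⟩ := h
  rcases t with _ | t
  · simp only [zero_add, one_mul, Nat.add_sub_cancel] at hbase ⊢
    exact ⟨m + k, by omega, le_rfl, hbase⟩
  · have hlen : m + k + 1 ≤ m + (t + 1 + 1) * k := by nlinarith
    rcases hchain 1 le_rfl (by omega) with ⟨hsplit, -⟩ | ⟨hsplit, -⟩ <;>
      simp only [Nat.sub_self, zero_mul, add_zero, one_mul] at hsplit
    · exact ⟨m + k, by omega, by omega, hsplit⟩
    · exact ⟨m + k + 1, by omega, hlen, hsplit⟩

lemma values_not_consecutive {n : ℕ} (hk : 2 ≤ k) (hj : j ≤ n) (hw : InjOn w (Icc 1 n))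
    (h : MemGamma k w j m) : w (m + 1) ≠ w m + 1 ∧ w m ≠ w (m + 1) + 1 := by
  obtain ⟨q, hmq, hqj, hsplit⟩ := h.exists_splits hk
  have hm := h.bounds.1
  have hne : ∀ p ∈ Icc 1 n, p < q → w q ≠ w p := fun p hp hpq he =>
    (hw ⟨by omega, by omega⟩ hp he ▸ hpq).false
  have := hsplit.add_two_le (hne m ⟨hm, by omega⟩ (by omega))
    (hne (m + 1) ⟨by omega, by omega⟩ (by omega))
  omega

end MemGamma

lemma gamW_eq_comp_adjSwap (k j : ℕ) (w : ℕ → ℕ) :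
    gamW k j w = w ∘ adjSwap {m | MemGamma k w j m} := by
  ext p
  simp only [gamW, adjSwap, Function.comp_apply, mem_ofPred_eq]
  split_ifs <;> rfl

section gamW

variable {k j n : ℕ} {w : ℕ → ℕ} (hk : 2 ≤ k) (hj : j ≤ n) (hw : InjOn w (Icc 1 n))
include hk hj hw

lemma injOn_gamW : InjOn (gamW k j w) (Icc 1 n) := by
  rw [gamW_eq_comp_adjSwap]
  refine injOn_comp_adjSwap (fun _ h => h.not_succ hk) (fun _ h => ?_) hw
  exact ⟨h.bounds.1, by linarith [h.bounds.2]⟩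

lemma iDesW_gamW : iDesW n (gamW k j w) = iDesW n w := by
  rw [gamW_eq_comp_adjSwap]
  refine iDesW_comp_adjSwap (fun _ h => h.not_succ hk) (fun _ h => ?_)
    fun _ h => h.values_not_consecutive hk hj hw
  exact ⟨h.bounds.1, by linarith [h.bounds.2]⟩

end gamW

section phiAux

variable {k n : ℕ} {w : ℕ → ℕ} (hk : 2 ≤ k) (hw : InjOn w (Icc 1 n))
include hk hw

lemma injOn_phiAux {j : ℕ} (hj : j ≤ n) : InjOn (phiAux k w j) (Icc 1 n) := by
  induction j with
  | zero => exact hw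
  | succ j ih => exact injOn_gamW hk hj (ih (by omega))

lemma iDesW_phiAux {j : ℕ} (hj : j ≤ n) : iDesW n (phiAux k w j) = iDesW n w := by
  induction j with
  | zero => rfl
  | succ j ih =>
    rw [phiAux, iDesW_gamW hk hj (injOn_phiAux hk hw (by omega)), ih (by omega)]

end phiAux

lemma wf_eq_getElem {l : List ℕ} {p : ℕ} (h : p - 1 < l.length) : wf l p = l[p - 1] :=
  List.getD_eq_getElem l 0 h

lemma injOn_wf {l : List ℕ} (hl : l.Nodup) : InjOn (wf l) (Icc 1 l.length) := by
  rintro p ⟨hp1, hp⟩ q ⟨hq1, hq⟩ he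
  rw [wf_eq_getElem (by omega), wf_eq_getElem (by omega), hl.getElem_inj_iff] at he
  omega

lemma idxOf_eq_of_wf_eq {l : List ℕ} (hl : l.Nodup) {p i : ℕ} (hp : p ∈ Icc 1 l.length)
    (hpi : wf l p = i) : i ∈ l ∧ l.idxOf i = p - 1 := by
  rw [wf_eq_getElem (by grind)] at hpi
  subst hpi
  exact ⟨List.getElem_mem _, hl.idxOf_getElem _ _⟩

lemma iDesL_eq_iDesW {l : List ℕ} (hl : l.Nodup) : iDesL l = iDesW l.length (wf l) := by
  ext i
  constructor
  · rintro ⟨hi, hi1, hlt⟩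
    have h1 := List.idxOf_lt_length_iff.mpr hi
    have h2 := List.idxOf_lt_length_iff.mpr hi1
    refine ⟨l.idxOf i + 1, ⟨by omega, by omega⟩, l.idxOf (i + 1) + 1,
      ⟨by omega, by omega⟩, by omega, ?_, ?_⟩ <;>
      simp only [wf, Nat.add_sub_cancel, List.getD_eq_getElem _ _ h1,
        List.getD_eq_getElem _ _ h2, List.getElem_idxOf]
  · rintro ⟨p, hp, q, hq, hpq, hwp, hwq⟩
    have hp1 := hp.1
    obtain ⟨hi, hpi⟩ := idxOf_eq_of_wf_eq hl hp hwp
    obtain ⟨hi1, hqi⟩ := idxOf_eq_of_wf_eq hl hq hwq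
    exact ⟨hi, hi1, by omega⟩

lemma length_phiL (k : ℕ) (l : List ℕ) : (phiL k l).length = l.length := List.length_ofFn

lemma wf_phiL (k : ℕ) (l : List ℕ) : EqOn (wf (phiL k l)) (phiW k l.length (wf l))
    (Icc 1 l.length) := by
  rintro p ⟨hp1, hp⟩
  rw [wf_eq_getElem (by rw [length_phiL]; omega)]
  simp only [phiL, List.getElem_ofFn, Nat.sub_add_cancel hp1]

lemma nodup_phiL {k : ℕ} {l : List ℕ} (h : InjOn (phiW k l.length (wf l)) (Icc 1 l.length)) :
    (phiL k l).Nodup := by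
  rw [phiL, List.nodup_ofFn]
  intro a b hab
  exact Fin.ext (by simpa using h ⟨by omega, by omega⟩ ⟨by omega, by omega⟩ hab)

/-- For every `k ≥ 2` and every permutation `w` of `1, …, n`,
`iDes(w) = iDes(φ^{(k)}(w))`. -/
theorem phi_preserves_iDes (k n : ℕ) (hk : 2 ≤ k) (l : List ℕ)
    (hl : l.Perm (List.range' 1 n)) :
    iDesL l = iDesL (phiL k l) := by
  have hnd : l.Nodup := hl.nodup_iff.mpr List.nodup_range'
  have hinj : InjOn (phiW k l.length (wf l)) (Icc 1 l.length) :=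
    injOn_phiAux hk (injOn_wf hnd) le_rfl
  rw [iDesL_eq_iDesW hnd, iDesL_eq_iDesW (nodup_phiL hinj), length_phiL,
    iDesW_congr (wf_phiL k l), phiW, iDesW_phiAux hk (injOn_wf hnd) le_rfl]
end

section
/- For every integer k ≥ 2, every word w of length n, and every j ≤ n, one has Γ_j^{(k)}(γ_j^{(k)}(w)) = Γ_j^{(k)}(w); consequently γ_j^{(k)} is an involution on words of length n, i.e. γ_j^{(k)}(γ_j^{(k)}(w)) = w. -/
open scoped Classical

/- Every element of `Γ_j^{(k)}(w)` is congruent to `j` modulo `k`, so for `k ≥ 2` the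
transpositions `(i, i+1)`, `i ∈ Γ`, are disjoint and each pair `w i, w (i+1)` with `i ≡ j` is
either left alone or swapped by `γ_j^{(k)}`. The conditions defining `Γ` only look at such pairs
and at the letter `w j`, which is fixed, and they are insensitive to swapping a pair: "splits
the pair `a, b`" is symmetric in `a, b`, and "exactly one of `w i`, `w (i+1)` splits" is
symmetric in the two letters. Hence `Γ(γ w) = Γ(w)`, and applying the same disjoint
transpositions twice gives back `w`. -/

lemma Splits.comm {x a b : ℕ} : Splits x a b ↔ Splits x b a := or_comm

lemma succ_mod_ne {k : ℕ} (hk : 2 ≤ k) (m : ℕ) : (m + 1) % k ≠ m % k := by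
  intro h
  have hdvd : k ∣ 1 := by
    simpa using (Nat.modEq_iff_dvd' (Nat.le_succ m)).mp h.symm
  have := Nat.le_of_dvd one_pos hdvd
  omega

namespace MemGamma

variable {k j m : ℕ} {w : ℕ → ℕ}

lemma mod_eq (h : MemGamma k w j m) : m % k = j % k := by
  obtain ⟨-, t, rfl, -⟩ := h
  rw [Nat.add_mul_mod_self_right]

lemma add_le (h : MemGamma k w j m) : m + k ≤ j := by
  obtain ⟨-, t, rfl, -⟩ := h
  have : k ≤ (t + 1) * k := Nat.le_mul_of_pos_left k t.succ_pos
  omega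

end MemGamma

section gamW

variable {k j : ℕ} (hk : 2 ≤ k) (w : ℕ → ℕ)
include hk

lemma gamW_of_memGamma {i : ℕ} (h : MemGamma k w j i) :
    gamW k j w i = w (i + 1) ∧ gamW k j w (i + 1) = w i := by
  have hsucc : ¬ MemGamma k w j (i + 1) := fun h' =>
    succ_mod_ne hk i (h'.mod_eq.trans h.mod_eq.symm)
  simp only [gamW, if_pos h, if_neg hsucc, Nat.add_sub_cancel, true_and]

lemma gamW_of_not_memGamma {i : ℕ} (hi : i % k = j % k) (h : ¬ MemGamma k w j i) :
    gamW k j w i = w i ∧ gamW k j w (i + 1) = w (i + 1) := by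
  have hsucc : ¬ MemGamma k w j (i + 1) := fun h' =>
    succ_mod_ne hk i (h'.mod_eq.trans hi.symm)
  have hpred : ¬ MemGamma k w j (i - 1) := fun hp => by
    have hi' : i - 1 + 1 = i := by have := hp.1; omega
    exact succ_mod_ne hk (i - 1) (by rw [hi', hi, hp.mod_eq])
  simp only [gamW, if_neg h, if_neg hpred, if_neg hsucc, Nat.add_sub_cancel, and_self]

lemma gamW_self : gamW k j w j = w j :=
  (gamW_of_not_memGamma hk w rfl fun h => by have := h.add_le; omega).1

lemma gamW_pair {i : ℕ} (hi : i % k = j % k) :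
    (gamW k j w i = w i ∧ gamW k j w (i + 1) = w (i + 1)) ∨
      (gamW k j w i = w (i + 1) ∧ gamW k j w (i + 1) = w i) := by
  by_cases h : MemGamma k w j i
  · exact Or.inr (gamW_of_memGamma hk w h)
  · exact Or.inl (gamW_of_not_memGamma hk w hi h)

lemma splits_gamW_iff {i : ℕ} (hi : i % k = j % k) (x : ℕ) :
    Splits x (gamW k j w i) (gamW k j w (i + 1)) ↔ Splits x (w i) (w (i + 1)) := by
  rcases gamW_pair hk w hi with ⟨h₀, h₁⟩ | ⟨h₀, h₁⟩ <;> rw [h₀, h₁]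
  exact Splits.comm

lemma xor_splits_gamW_iff {i l : ℕ} (hi : i % k = j % k) (hl : l % k = j % k) :
    Xor (Splits (gamW k j w l) (gamW k j w i) (gamW k j w (i + 1)))
        (Splits (gamW k j w (l + 1)) (gamW k j w i) (gamW k j w (i + 1))) ↔
      Xor (Splits (w l) (w i) (w (i + 1))) (Splits (w (l + 1)) (w i) (w (i + 1))) := by
  simp only [splits_gamW_iff hk w hi]
  rcases gamW_pair hk w hl with ⟨h₀, h₁⟩ | ⟨h₀, h₁⟩ <;> rw [h₀, h₁]
  rw [xor_comm]

theorem memGamma_gamW_iff (m : ℕ) : MemGamma k (gamW k j w) j m ↔ MemGamma k w j m := by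
  refine and_congr_right fun _ => exists_congr fun t => and_congr_right fun ht => ?_
  have hmod (s : ℕ) : (m + s * k) % k = j % k := by
    rw [Nat.add_mul_mod_self_right, ← ht, Nat.add_mul_mod_self_right]
  have hjk : j - k = m + t * k := by
    rw [← ht, add_one_mul]
    omega
  rw [gamW_self hk w, hjk, splits_gamW_iff hk w (hmod t)]
  exact and_congr_right fun _ => forall₃_congr fun s _ _ =>
    xor_splits_gamW_iff hk w (hmod (s - 1)) (hmod s)

theorem gamW_gamW (p : ℕ) : gamW k j (gamW k j w) p = w p := by
  show (if MemGamma k (gamW k j w) j p then _ else _) = _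
  simp only [memGamma_gamW_iff hk w]
  split_ifs with hp hq
  · exact (gamW_of_memGamma hk w hp).2
  · rw [(gamW_of_memGamma hk w hq).1, Nat.sub_add_cancel (hq.1.trans (Nat.sub_le p 1))]
  · simp only [gamW, if_neg hp, if_neg hq]

end gamW

theorem gamma_involution_general (k j : ℕ) (hk : 2 ≤ k) (w : ℕ → ℕ) :
    (∀ m, MemGamma k (gamW k j w) j m ↔ MemGamma k w j m) ∧
      (∀ p, gamW k j (gamW k j w) p = w p) :=
  ⟨memGamma_gamW_iff hk w, gamW_gamW hk w⟩

/-- For `k ≥ 2`, a word `w` of length `n` and `j ≤ n`,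
`Γ_j^{(k)}(γ_j^{(k)}(w)) = Γ_j^{(k)}(w)`; consequently `γ_j^{(k)}` is an involution:
`γ_j^{(k)}(γ_j^{(k)}(w)) = w`. -/
theorem gamma_involution (k n j : ℕ) (hk : 2 ≤ k) (hj : j ≤ n)
    (w : ℕ → ℕ) (hw : ∀ i, 1 ≤ i → i ≤ n → 0 < w i) :
    (∀ m, MemGamma k (gamW k j w) j m ↔ MemGamma k w j m) ∧
      (∀ p, gamW k j (gamW k j w) p = w p) :=
  gamma_involution_general k j hk w
end
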